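/- arXiv:2505.06728 — 2 statements merged into one kernel-verified Lean document; each statement's English description precedes it below -/
import Mathlib

section
/- Cooley–Tukey splitting rule: for n = k·m, the DFT matrix factors as F_n = L^n_k (I_k ⊗ F_m) W^n_m (F_k ⊗ I_m). -/
open Matrix Complex

/-- The primitive `n`-th root of unity `ω_n = exp(-2πi/n)`. -/
noncomputable def tw (n : ℕ) : ℂ := Complex.exp (-(2 * Real.pi * Complex.I) / n)

/-- The `n × n` DFT matrix `F_n = [ω_n^{kl}]`. -/
noncomputable def DFT (n : ℕ) : Matrix (Fin n) (Fin n) ℂ :=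
  fun r c => tw n ^ (r.val * c.val)

/-- The stride permutation `L^n_k` (with `n = k*m`), sending the basis vector
`e_{i,k} ⊗ e_{j,m}` (flat index `i*m+j`) to `e_{j,m} ⊗ e_{i,k}` (flat index `j*k+i`). -/
noncomputable def Lmat (n k m : ℕ) : Matrix (Fin n) (Fin n) ℂ :=
  fun r c => if r.val = (c.val % m) * k + c.val / m then 1 else 0

/-- The diagonal twiddle matrix `W^n_m` (with `n = k*m`), acting on
`e_{i,k} ⊗ e_{j,m}` (flat index `c = i*m+j`) by the scalar `ω_n^{ij}`. -/
noncomputable def Wmat (n m : ℕ) : Matrix (Fin n) (Fin n) ℂ :=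
  fun r c => if r = c then tw n ^ ((c.val / m) * (c.val % m)) else 0

/-- Entry of a `k × k` matrix at natural-number indices (0 outside range). -/
noncomputable def ment {k : ℕ} (A : Matrix (Fin k) (Fin k) ℂ) (i j : ℕ) : ℂ :=
  if h : i < k ∧ j < k then A ⟨i, h.1⟩ ⟨j, h.2⟩ else 0

/-- Kronecker product `A ⊗ B` of a `k×k` and an `m×m` matrix, written on flat
indices of size `n = k*m` (row-major: index `i*m+j ↔ e_{i,k} ⊗ e_{j,m}`). -/
noncomputable def kron (n k m : ℕ) (A : Matrix (Fin k) (Fin k) ℂ)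
    (B : Matrix (Fin m) (Fin m) ℂ) : Matrix (Fin n) (Fin n) ℂ :=
  fun r c => ment A (r.val / m) (c.val / m) * ment B (r.val % m) (c.val % m)

/-- Value of a digit list `[d_0, d_1, …]` in the mixed-radix system with radices
`[c_0, c_1, …]` (least-significant first): `d_0 + c_0*(d_1 + c_1*(…))`. -/
def mval : List ℕ → List ℕ → ℕ
  | c :: cs, d :: ds => d + c * mval cs ds
  | _, _ => 0

/-- Digits (least-significant first) of `x` in the mixed-radix system with
radices `[c_0, c_1, …]` (least-significant first). -/
def mdig : List ℕ → ℕ → List ℕ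
  | [], _ => []
  | c :: cs, x => x % c :: mdig cs (x / c)

/-- The digit-reversal permutation `P_α` of a multi-index `α = (n_K, …, n_0)`,
where `a = [n_0, …, n_K]` lists the radices of the system generated by `α`
least-significant first: `x` is decomposed in the system generated by
`α* = (n_0, …, n_K)` and re-read with reversed digits in the system of `α`. -/
def mrev (a : List ℕ) (x : ℕ) : ℕ := mval a ((mdig a.reverse x).reverse)

/-- The digit-reversal permutation matrix `S_α`, `S_α e_x = e_{P_α x}`;
`a = [n_0, …, n_K]` lists `α = (n_K, …, n_0)` least-significant first. -/
noncomputable def Smat (n : ℕ) (a : List ℕ) : Matrix (Fin n) (Fin n) ℂ :=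
  fun r c => if r.val = mrev a c.val then 1 else 0

/-- The diagonal matrix `V_{k,m,n}` of size `N = k*m*n`, acting on
`e_{i,k} ⊗ e_{j,m} ⊗ e_{ℓ,n}` (flat index `i*(m*n) + j*n + ℓ`) by
`ω_{kmn}^{i(ℓ m + j)}`. -/
noncomputable def Vmat (N k m n : ℕ) : Matrix (Fin N) (Fin N) ℂ :=
  fun r c => if r = c then
    tw (k * m * n) ^ ((c.val / (m * n)) * ((c.val % n) * m + (c.val / n) % m)) else 0

/-!
Index `Fin (k * m)` by `Fin k × Fin m` in two ways: row-major, `(i, j) ↦ j + m * i`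
(`finProdFinEquiv`, the indexing of `kron` and `Wmat`), and column-major, `(i, j) ↦ i + k * j`
(`strideEquiv`). Then `L^n_k` is the permutation matrix taking one indexing to the other, and
the three right factors become `1 ⊗ₖ F_m`, a diagonal matrix and `F_k ⊗ₖ 1` on pairs. Their
product has entry `ω_m^{j j'} ω_n^{i j'} ω_k^{i i'}` at `((i, j), (i', j'))`, which is
`ω_n^{(i + k j)(j' + m i')}` because `ω_n^k = ω_m`, `ω_n^m = ω_k` and `ω_n^n = 1`.
-/

open scoped Kronecker

lemma tw_pow_self (n : ℕ) : tw n ^ n = 1 := by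
  rcases Nat.eq_zero_or_pos n with rfl | hn
  · simp
  rw [tw, ← Complex.exp_nat_mul, mul_div_cancel₀ _ (by exact_mod_cast hn.ne'), Complex.exp_neg,
    Complex.exp_two_pi_mul_I, inv_one]

lemma tw_mul_pow_left {k : ℕ} (hk : k ≠ 0) (m : ℕ) : tw (k * m) ^ k = tw m := by
  rcases Nat.eq_zero_or_pos m with rfl | hm
  · simp [tw]
  rw [tw, tw, ← Complex.exp_nat_mul]
  congr 1
  push_cast
  field_simp

lemma tw_mul_pow_right (k : ℕ) {m : ℕ} (hm : m ≠ 0) : tw (k * m) ^ m = tw k := by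
  rw [mul_comm, tw_mul_pow_left hm]

lemma tw_pow_stride {k m : ℕ} (hk : k ≠ 0) (hm : m ≠ 0) (i j i' j' : ℕ) :
    tw (k * m) ^ ((i + k * j) * (j' + m * i')) =
      tw m ^ (j * j') * tw (k * m) ^ (i * j') * tw k ^ (i * i') := by
  have h : (i + k * j) * (j' + m * i') =
      k * (j * j') + i * j' + m * (i * i') + k * m * (j * i') := by
    ring
  rw [h, pow_add, pow_add, pow_add, pow_mul _ k, pow_mul _ m, pow_mul _ (k * m),
    tw_mul_pow_left hk, tw_mul_pow_right k hm, tw_pow_self, one_pow, mul_one]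

def strideEquiv (k m : ℕ) : Fin k × Fin m ≃ Fin (k * m) :=
  (Equiv.prodComm _ _).trans (finProdFinEquiv.trans (finCongr (Nat.mul_comm m k)))

@[simp]
lemma strideEquiv_apply_val {k m : ℕ} (p : Fin k × Fin m) :
    (strideEquiv k m p : ℕ) = p.1 + k * p.2 := by
  simp [strideEquiv]

lemma Lmat_eq_toMatrix (k m : ℕ) :
    Lmat (k * m) k m = ((strideEquiv k m).symm.trans finProdFinEquiv).toPEquiv.toMatrix := by
  ext r c
  obtain ⟨p, rfl⟩ := (strideEquiv k m).surjective r
  obtain ⟨q, rfl⟩ := finProdFinEquiv.surjective c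
  have hq : (finProdFinEquiv q : ℕ) % m * k + finProdFinEquiv q / m = strideEquiv k m q := by
    simp [finProdFinEquiv_apply_val, Nat.add_mul_div_left _ _ q.2.pos, Nat.mod_eq_of_lt q.2.isLt,
      add_comm, mul_comm]
  simp only [Lmat, hq, Fin.val_inj, (strideEquiv k m).apply_eq_iff_eq, PEquiv.toMatrix_apply,
    Equiv.toPEquiv_apply, Equiv.trans_apply, Equiv.symm_apply_apply, Option.mem_def,
    Option.some_inj, finProdFinEquiv.apply_eq_iff_eq]

lemma kron_eq_submatrix_kronecker {k m : ℕ} (A : Matrix (Fin k) (Fin k) ℂ)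
    (B : Matrix (Fin m) (Fin m) ℂ) :
    kron (k * m) k m A B = (A ⊗ₖ B).submatrix finProdFinEquiv.symm finProdFinEquiv.symm := by
  ext r c
  have hm : 0 < m := Nat.pos_of_mul_pos_left r.pos
  have hdiv (x : Fin (k * m)) : x / m < k := Nat.div_lt_of_lt_mul (x.isLt.trans_eq (mul_comm k m))
  simp [kron, ment, Nat.mod_lt _ hm, hdiv]
  rfl

lemma Wmat_eq_submatrix_diagonal (k m : ℕ) :
    Wmat (k * m) m = (diagonal fun p : Fin k × Fin m => tw (k * m) ^ (p.1.val * p.2.val)).submatrix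
      finProdFinEquiv.symm finProdFinEquiv.symm := by
  ext r c
  simp only [Wmat, submatrix_apply, diagonal_apply, finProdFinEquiv.symm.apply_eq_iff_eq]
  split_ifs with h
  · subst h; simp [Fin.coe_divNat, Fin.coe_modNat]
  · rfl

lemma one_kronecker_mul_diagonal_mul_kronecker_one_apply {R ι κ : Type*} [CommSemiring R]
    [Fintype ι] [DecidableEq ι] [Fintype κ] [DecidableEq κ]
    (A : Matrix ι ι R) (B : Matrix κ κ R) (w : ι × κ → R) (i i' : ι) (j j' : κ) :
    (((1 : Matrix ι ι R) ⊗ₖ B) * diagonal w * (A ⊗ₖ (1 : Matrix κ κ R))) (i, j) (i', j') =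
      B j j' * w (i, j') * A i i' := by
  simp [Matrix.mul_apply (M := _ * diagonal w), Fintype.sum_prod_type, one_apply]

theorem dft_split_general (k m n : ℕ) (hn : n = k * m) :
    DFT n = Lmat n k m * kron n k m 1 (DFT m) * Wmat n m * kron n k m (DFT k) 1 := by
  subst hn
  ext r c
  obtain ⟨⟨i, j⟩, rfl⟩ := (strideEquiv k m).surjective r
  obtain ⟨⟨i', j'⟩, rfl⟩ := finProdFinEquiv.surjective c
  rw [Lmat_eq_toMatrix, kron_eq_submatrix_kronecker, kron_eq_submatrix_kronecker,
    Wmat_eq_submatrix_diagonal, mul_assoc, mul_assoc, submatrix_mul_equiv, submatrix_mul_equiv,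
    PEquiv.toMatrix_toPEquiv_mul, ← mul_assoc]
  simp only [submatrix_apply, id, Equiv.trans_apply, Equiv.symm_apply_apply,
    one_kronecker_mul_diagonal_mul_kronecker_one_apply]
  simp only [DFT, strideEquiv_apply_val, finProdFinEquiv_apply_val]
  exact tw_pow_stride i.pos.ne' j.pos.ne' i j i' j'

/-- Cooley–Tukey splitting rule
`F_n = L^n_k (I_k ⊗ F_m) W^n_m (F_k ⊗ I_m)` for `n = k·m`. -/
theorem dft_split (k m n : ℕ) (hk : 0 < k) (hm : 0 < m) (hn : n = k * m) :
    DFT n = Lmat n k m * kron n k m 1 (DFT m) * Wmat n m * kron n k m (DFT k) 1 :=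
  dft_split_general k m n hn
end

section
/- For a multi-index α with |α| = N and any M > 0, S_{(α,M)} = L^{NM}_M (I_M ⊗ S_α), where (α,M) denotes α extended by M on the right. -/
open Matrix Complex

/-! All three matrices are permutation matrices `e_x ↦ e_{f x}`, so the identity reduces to
one between index maps. Write `x = i N + j` with `i < M`, `j < N`. The factor `I_M ⊗ S_α` sends
`x` to `i N + P_α j`, and `L^{NM}_M` then sends it to `P_α j · M + i`. On the other side, `i` is
the most significant digit of `x` in the system of `(α,M)* = (M, n_0, …, n_K)`; reversal makes it
the least significant digit of `P_{(α,M)} x`, and the remaining digits are those of `P_α j`. -/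

lemma mdig_append (l₁ l₂ : List ℕ) (x : ℕ) :
    mdig (l₁ ++ l₂) x = mdig l₁ x ++ mdig l₂ (x / l₁.prod) := by
  induction l₁ generalizing x with
  | nil => simp [mdig]
  | cons c cs ih => simp [mdig, ih, Nat.div_div_eq_div_mul]

lemma mdig_mod_prod (l : List ℕ) (x : ℕ) : mdig l (x % l.prod) = mdig l x := by
  induction l generalizing x with
  | nil => rfl
  | cons c cs ih =>
    simp only [mdig, List.prod_cons]
    rw [Nat.mod_mod_of_dvd _ (Dvd.intro _ rfl), Nat.mod_mul_right_div_self, ih]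

lemma forall₂_mdig_lt {l : List ℕ} (hl : ∀ c ∈ l, 0 < c) (x : ℕ) :
    List.Forall₂ (· < ·) (mdig l x) l := by
  induction l generalizing x with
  | nil => exact .nil
  | cons c cs ih =>
    exact .cons (Nat.mod_lt _ (hl c (by simp)))
      (ih (fun y hy => hl y (by simp [hy])) _)

lemma mval_lt_prod {l d : List ℕ} (h : List.Forall₂ (· < ·) d l) : mval l d < l.prod := by
  induction h with
  | nil => simp [mval]
  | @cons e c ds cs hec _ ih =>
    calc e + c * mval cs ds < c * (mval cs ds + 1) := by linarith
      _ ≤ c * cs.prod := Nat.mul_le_mul_left _ ih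

lemma mrev_lt_prod {a : List ℕ} (ha : ∀ c ∈ a, 0 < c) (x : ℕ) : mrev a x < a.prod := by
  refine mval_lt_prod ?_
  rw [← List.forall₂_reverse_iff, List.reverse_reverse]
  exact forall₂_mdig_lt (fun c hc => ha c (List.mem_reverse.mp hc)) x

lemma mrev_mod_prod (a : List ℕ) (x : ℕ) : mrev a (x % a.prod) = mrev a x := by
  rw [mrev, mrev, ← List.prod_reverse, mdig_mod_prod]

lemma mrev_cons (a : List ℕ) (M x : ℕ) :
    mrev (M :: a) x = x / a.prod % M + M * mrev a x := by
  rw [mrev, List.reverse_cons, mdig_append, List.prod_reverse]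
  simp [mdig, mval, mrev]

lemma mul_add_div_mod (i : ℕ) {q N : ℕ} (hq : q < N) :
    (i * N + q) / N = i ∧ (i * N + q) % N = q :=
  (Nat.div_mod_unique (Nat.zero_lt_of_lt hq)).mpr ⟨by ring, hq⟩

def permMat (R : Type*) [Zero R] [One R] (n : ℕ) (f : ℕ → ℕ) : Matrix (Fin n) (Fin n) R :=
  fun r c => if r.val = f c.val then 1 else 0

lemma permMat_congr {R : Type*} [Zero R] [One R] {n : ℕ} {f g : ℕ → ℕ}
    (h : ∀ c < n, f c = g c) :
    permMat R n f = permMat R n g := by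
  ext r c
  simp only [permMat, h c c.isLt]

lemma permMat_mul {R : Type*} [NonAssocSemiring R] {n : ℕ} (f g : ℕ → ℕ)
    (hg : ∀ c < n, g c < n) :
    permMat R n f * permMat R n g = permMat R n (f ∘ g) := by
  ext r c
  rw [Matrix.mul_apply, Finset.sum_eq_single ⟨g c, hg c c.isLt⟩]
  · simp [permMat]
  · intro t _ ht
    simp [permMat, Fin.ext_iff.not.mp ht]
  · simp

lemma Smat_eq_permMat (n : ℕ) (a : List ℕ) : Smat n a = permMat ℂ n (mrev a) := rfl

lemma Lmat_eq_permMat (n k m : ℕ) : Lmat n k m = permMat ℂ n (fun c => c % m * k + c / m) := rfl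

lemma kron_one_permMat (M N : ℕ) {f : ℕ → ℕ} (hf : ∀ j < N, f j < N) :
    kron (N * M) M N 1 (permMat ℂ N f) =
      permMat ℂ (N * M) (fun c => c / N * N + f (c % N)) := by
  ext r c
  have hN : 0 < N := Nat.pos_of_mul_pos_right (Nat.zero_lt_of_lt c.isLt)
  have hr := Nat.div_lt_of_lt_mul r.isLt
  have hc := Nat.div_lt_of_lt_mul c.isLt
  have hfc := hf _ (Nat.mod_lt c hN)
  have hblock : r.val / N = c.val / N ∧ r.val % N = f (c.val % N) ↔
      r.val = c.val / N * N + f (c.val % N) :=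
    ⟨fun h => by rw [← Nat.div_add_mod' r N, h.1, h.2], fun h => h ▸ mul_add_div_mod _ hfc⟩
  simp only [kron, ment, permMat, Matrix.one_apply, Fin.ext_iff,
    dif_pos (And.intro hr hc), dif_pos (And.intro (Nat.mod_lt r hN) (Nat.mod_lt c hN)),
    ite_zero_mul_ite_zero, mul_one, hblock]

theorem digit_reversal_extend_right_general (a : List ℕ) (ha : ∀ x ∈ a, 0 < x)
    (M N : ℕ) (hN : N = a.prod) :
    Smat (N * M) (M :: a) = Lmat (N * M) M N * kron (N * M) M N 1 (Smat N a) := by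
  have hrev : ∀ j < N, mrev a j < N := fun j _ => hN ▸ mrev_lt_prod ha j
  have hblock : ∀ c < N * M, c / N * N + mrev a (c % N) < N * M := fun c hc => by
    have := Nat.div_lt_of_lt_mul hc
    have := hrev (c % N) (Nat.mod_lt c (Nat.pos_of_mul_pos_right (Nat.zero_lt_of_lt hc)))
    nlinarith
  rw [Smat_eq_permMat, Lmat_eq_permMat, Smat_eq_permMat, kron_one_permMat M N hrev,
    permMat_mul _ _ hblock]
  refine permMat_congr fun c hc => ?_
  have hN0 : 0 < N := Nat.pos_of_mul_pos_right (Nat.zero_lt_of_lt hc)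
  have hrev_mod : mrev a (c % N) = mrev a c := by rw [hN, mrev_mod_prod]
  obtain ⟨hdiv, hmod⟩ := mul_add_div_mod (c / N) (hrev_mod ▸ hrev _ (Nat.mod_lt c hN0))
  rw [Function.comp_apply, hrev_mod, hdiv, hmod, mrev_cons, ← hN,
    Nat.mod_eq_of_lt (Nat.div_lt_of_lt_mul hc)]
  ring

/-- `S_{(α,M)} = L^{NM}_M (I_M ⊗ S_α)`, where `|α| = N`, `M > 0`,
and `(α,M)` extends `α = (n_K,…,n_0)` by `M` on the right (least significant
side), i.e. the least-significant-first radix list becomes `M :: a`. -/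
theorem digit_reversal_extend_right (a : List ℕ) (ha : ∀ x ∈ a, 0 < x)
    (M N : ℕ) (hM : 0 < M) (hN : N = a.prod) :
    Smat (N * M) (M :: a) = Lmat (N * M) M N * kron (N * M) M N 1 (Smat N a) :=
  digit_reversal_extend_right_general a ha M N hN
end
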